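/- arXiv:2112.03092 — 8 statements merged into one kernel-verified Lean document; each statement's English description precedes it below -/
import Mathlib

section
/- Let T₁, T₁', λ₁, λ₁' > 0 with λ₁/T₁ > λ₁'/T₁'. Define g(m) = (e^m − 1)λ₁' − λ₁ + λ₁ e^{−m T₁'/T₁} and m₀ = ln(T₁'λ₁/(T₁λ₁')) / (1 + T₁'/T₁). Then m₀ > 0 and g(m₀) < 0. -/
open Real

/-!
`m₀` is the critical point of `g`: with `r = T₁'/T₁` it solves `λ₁' e^m = λ₁ r e^{-r m}`, i.e.
`e^{(1 + r) m} = r λ₁ / λ₁'`, and this ratio exceeds `1` exactly when `λ₁/T₁ > λ₁'/T₁'`. Bounding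
both exponentials of `g(m₀) = λ₁' (e^{m₀} - 1) - λ₁ (1 - e^{-r m₀})` by their tangent lines at `m₀`
turns the two terms into the two equal sides of the critical-point equation, with strict inequality
since `m₀ ≠ 0`. This is the convexity argument `g(m₀) < g(0) = 0`.
-/

theorem Real.exp_sub_exp_lt_sub_mul_exp {x y : ℝ} (h : x ≠ y) :
    exp x - exp y < (x - y) * exp x := by
  have htangent := add_one_lt_exp (sub_ne_zero.mpr h.symm)
  have hsplit : exp y = exp x * exp (y - x) := by rw [← exp_add]; ring_nf
  calc exp x - exp y < exp x - exp x * (y - x + 1) := by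
        rw [hsplit]; gcongr
    _ = (x - y) * exp x := by ring

theorem mul_exp_eq_mul_exp_neg_of_eq_log_div {a b r m : ℝ} (ha : 0 < a) (hb : 0 < b)
    (hr : 1 + r ≠ 0) (hm : m = log (b / a) / (1 + r)) :
    a * exp m = b * exp (-m * r) := by
  have hexp : exp (m * (1 + r)) = b / a := by
    rw [hm, div_mul_cancel₀ _ hr, exp_log (div_pos hb ha)]
  have hsplit : exp m = exp (m * (1 + r)) * exp (-m * r) := by rw [← exp_add]; ring_nf
  rw [hsplit, hexp]
  field_simp

theorem mul_exp_sub_one_lt_of_critical {a b r m : ℝ} (ha : 0 < a) (hb : 0 < b) (hr : 0 < r)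
    (hm : 0 < m) (hcrit : a * exp m = b * r * exp (-m * r)) :
    a * (exp m - 1) < b * (1 - exp (-m * r)) := by
  have hleft : exp m - 1 < m * exp m := by
    simpa using exp_sub_exp_lt_sub_mul_exp hm.ne'
  have hright : exp (-m * r) - 1 < -m * r * exp (-m * r) := by
    simpa using exp_sub_exp_lt_sub_mul_exp (mul_neg_of_neg_of_pos (neg_neg_of_pos hm) hr).ne
  calc a * (exp m - 1) < a * (m * exp m) := mul_lt_mul_of_pos_left hleft ha
    _ = b * (m * r * exp (-m * r)) := by linear_combination m * hcrit
    _ < b * (1 - exp (-m * r)) := mul_lt_mul_of_pos_left (by linarith) hb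

/-- Let `T₁, T₁', λ₁, λ₁' > 0` with `λ₁/T₁ > λ₁'/T₁'`. With
`g(m) = (e^m − 1) λ₁' − λ₁ + λ₁ e^{−m T₁'/T₁}` and
`m₀ = ln(T₁' λ₁ / (T₁ λ₁')) / (1 + T₁'/T₁)`, we have `m₀ > 0` and `g(m₀) < 0`. -/
theorem g_neg_at_m₀ (T₁ T₁' lam₁ lam₁' : ℝ)
    (hT₁ : 0 < T₁) (hT₁' : 0 < T₁') (hlam₁ : 0 < lam₁) (hlam₁' : 0 < lam₁')
    (hrate : lam₁' / T₁' < lam₁ / T₁)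
    (g : ℝ → ℝ)
    (hg : ∀ m, g m = (Real.exp m - 1) * lam₁' - lam₁ + lam₁ * Real.exp (-m * (T₁' / T₁)))
    (m₀ : ℝ) (hm₀ : m₀ = Real.log (T₁' * lam₁ / (T₁ * lam₁')) / (1 + T₁' / T₁)) :
    0 < m₀ ∧ g m₀ < 0 := by
  set r := T₁' / T₁
  have hr : 0 < r := div_pos hT₁' hT₁
  have hratio : T₁' * lam₁ / (T₁ * lam₁') = lam₁ * r / lam₁' := by
    simp only [r]; field_simp
  have hratio_gt_one : 1 < lam₁ * r / lam₁' := by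
    rw [← hratio, one_lt_div (by positivity)]
    rw [div_lt_div_iff₀ hT₁' hT₁] at hrate
    linarith
  rw [hratio] at hm₀
  have hm₀_pos : 0 < m₀ := hm₀ ▸ div_pos (log_pos hratio_gt_one) (by linarith)
  have hcrit := mul_exp_eq_mul_exp_neg_of_eq_log_div hlam₁' (by positivity) (by linarith) hm₀
  have hlt := mul_exp_sub_one_lt_of_critical hlam₁' hlam₁ hr hm₀_pos hcrit
  refine ⟨hm₀_pos, ?_⟩
  rw [hg]
  linarith
end

section
/- (Lemma 2) Let T₁, T₁', λ₁, λ₁' > 0 with λ₁/T₁ > λ₁'/T₁', and let m₀ = ln(T₁'λ₁/(T₁λ₁')) / (1 + T₁'/T₁). Define f(t) = (e^{m₀} − 1)λ₁' t − λ₁ t + λ₁ e^{−m₀ T₁'/T₁} t. Then e^{f(t)} tends to 0 as t → ∞. -/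
open Real Filter Topology

/-- Lemma 2: Let `T₁, T₁', λ₁, λ₁' > 0` with `λ₁/T₁ > λ₁'/T₁'`,
`m₀ = ln(T₁' λ₁ / (T₁ λ₁')) / (1 + T₁'/T₁)` and
`f(t) = (e^{m₀} − 1) λ₁' t − λ₁ t + λ₁ e^{−m₀ T₁'/T₁} t`. Then `e^{f(t)} → 0` as `t → ∞`. -/
theorem lemma2_exp_f_tendsto_zero (T₁ T₁' lam₁ lam₁' : ℝ)
    (hT₁ : 0 < T₁) (hT₁' : 0 < T₁') (hlam₁ : 0 < lam₁) (hlam₁' : 0 < lam₁')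
    (hrate : lam₁' / T₁' < lam₁ / T₁)
    (m₀ : ℝ) (hm₀ : m₀ = Real.log (T₁' * lam₁ / (T₁ * lam₁')) / (1 + T₁' / T₁))
    (f : ℝ → ℝ)
    (hf : ∀ t, f t = (Real.exp m₀ - 1) * lam₁' * t - lam₁ * t +
      lam₁ * Real.exp (-m₀ * (T₁' / T₁)) * t) :
    Tendsto (fun t => Real.exp (f t)) atTop (𝓝 0) := by
  set a : ℝ := T₁' / T₁ with ha_def
  have ha : 0 < a := div_pos hT₁' hT₁
  have hratio : 1 < T₁' * lam₁ / (T₁ * lam₁') := by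
    rw [one_lt_div (by positivity)]
    have := (div_lt_div_iff₀ hT₁' hT₁).mp hrate
    nlinarith
  have hm₀pos : 0 < m₀ := by
    rw [hm₀]
    exact div_pos (Real.log_pos hratio) (by positivity)
  have hiden : Real.exp (m₀ * (1 + a)) = T₁' * lam₁ / (T₁ * lam₁') := by
    have h1a : (1 + a) ≠ 0 := by positivity
    rw [hm₀, div_mul_cancel₀ _ h1a, Real.exp_log (by positivity)]
  -- key identity: lam₁' * exp m₀ = a * lam₁ * exp (-m₀ * a)
  have e2 : Real.exp (-m₀) * Real.exp m₀ = 1 := by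
    rw [← Real.exp_add]; ring_nf; exact Real.exp_zero
  have hkey : lam₁' * Real.exp m₀ = a * lam₁ * Real.exp (-m₀ * a) := by
    have h2 : lam₁' * Real.exp (m₀ * (1 + a)) = a * lam₁ := by
      rw [hiden, ha_def]
      field_simp
    have e1 : Real.exp (m₀ * (1 + a)) * Real.exp (-m₀ * a) = Real.exp m₀ := by
      rw [← Real.exp_add]; ring_nf
    calc lam₁' * Real.exp m₀
        = lam₁' * (Real.exp (m₀ * (1 + a)) * Real.exp (-m₀ * a)) := by rw [e1]
      _ = (lam₁' * Real.exp (m₀ * (1 + a))) * Real.exp (-m₀ * a) := by ring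
      _ = a * lam₁ * Real.exp (-m₀ * a) := by rw [h2]
  have hlam' : lam₁' = a * lam₁ * Real.exp (-m₀) * Real.exp (-m₀ * a) := by
    calc lam₁' = lam₁' * (Real.exp (-m₀) * Real.exp m₀) := by rw [e2]; ring
      _ = (lam₁' * Real.exp m₀) * Real.exp (-m₀) := by ring
      _ = (a * lam₁ * Real.exp (-m₀ * a)) * Real.exp (-m₀) := by rw [hkey]
      _ = a * lam₁ * Real.exp (-m₀) * Real.exp (-m₀ * a) := by ring
  set c : ℝ := (Real.exp m₀ - 1) * lam₁' - lam₁ + lam₁ * Real.exp (-m₀ * a) with hc_def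
  have hc : c < 0 := by
    have key1 : 1 - Real.exp (-m₀) < m₀ := by
      have := Real.add_one_lt_exp (x := -m₀) (by linarith)
      linarith
    have key2 : a * m₀ + 1 ≤ Real.exp (a * m₀) := Real.add_one_le_exp _
    have hmul : Real.exp (-m₀ * a) * Real.exp (a * m₀) = 1 := by
      rw [← Real.exp_add]; ring_nf; exact Real.exp_zero
    have hstep : Real.exp (-m₀ * a) * (1 + a * (1 - Real.exp (-m₀))) < 1 := by
      have h5 : 1 + a * (1 - Real.exp (-m₀)) < Real.exp (a * m₀) := by
        nlinarith
      nlinarith [Real.exp_pos (-m₀ * a)]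
    have hcc : c = lam₁ * (Real.exp (-m₀ * a) * (1 + a * (1 - Real.exp (-m₀))) - 1) := by
      rw [hc_def]
      rw [hlam']
      linear_combination (a * lam₁ * Real.exp (-m₀ * a)) * e2
    rw [hcc]
    nlinarith
  have hfc : ∀ t, f t = c * t := by
    intro t; rw [hf t, hc_def]; ring
  have : Tendsto (fun t => Real.exp (c * t)) atTop (𝓝 0) :=
    Real.tendsto_exp_atBot.comp (Tendsto.const_mul_atTop_of_neg hc tendsto_id)
  exact this.congr fun t => by rw [hfc t]
end

section
/- Let T₁, T₂, T₁', λ₁, λ₂ > 0 with T₂ ≥ T₁ and λ₁/T₁ = λ₂/T₂. Define f₁(m) = −λ₁ + λ₂ + λ₁ e^{−m T₁'/T₁} − λ₂ e^{−m T₁'/T₂}. Then f₁(m) ≥ 0 for every m ≥ 0. -/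
/-!
Write `λᵢ = c Tᵢ` with `c = λ₁/T₁ ≥ 0` and `x = m T₁' ≥ 0`; then
`f₁(m) = c (φ(T₂) - φ(T₁))` with `φ(T) = T (1 - e^{-x/T}) = x · g(x/T)`, where
`g(u) = (1 - e^{-u}) / u` is the slope of the convex function `exp` between `-u` and `0`.
Slopes of a convex function increase, so `g` is antitone on `(0, ∞)` and `φ` is monotone.
-/

open Real Set

lemma one_sub_exp_neg_div_antitoneOn :
    AntitoneOn (fun u : ℝ => (1 - exp (-u)) / u) (Ioi 0) := by
  intro a ha b hb hab
  have hslope := convexOn_exp.secant_mono (mem_univ 0) (mem_univ (-b)) (mem_univ (-a))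
    (neg_ne_zero.2 (ne_of_gt hb)) (neg_ne_zero.2 (ne_of_gt ha)) (neg_le_neg hab)
  simpa only [exp_zero, sub_zero, ← neg_sub (1 : ℝ), neg_div_neg_eq] using hslope

lemma mul_one_sub_exp_neg_div_monotoneOn {x : ℝ} (hx : 0 ≤ x) :
    MonotoneOn (fun T : ℝ => T * (1 - exp (-(x / T)))) (Ioi 0) := by
  rcases hx.eq_or_lt with rfl | hx
  · simpa using monotoneOn_const
  intro S hS T hT hST
  have hS : 0 < S := hS
  have hT : 0 < T := hT
  have hslope := one_sub_exp_neg_div_antitoneOn (div_pos hx hT) (div_pos hx hS)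
    (div_le_div_of_nonneg_left hx.le hS hST)
  have hrescale : ∀ R : ℝ, 0 < R →
      R * (1 - exp (-(x / R))) = x * ((1 - exp (-(x / R))) / (x / R)) :=
    fun R hR => by field_simp
  simp only [hrescale S hS, hrescale T hT]
  exact mul_le_mul_of_nonneg_left hslope hx.le

theorem f₁_nonneg_general (T₁ T₂ T₁' lam₁ lam₂ : ℝ)
    (hT₁ : 0 < T₁) (hT₁' : 0 < T₁') (hlam₁ : 0 < lam₁)
    (hT : T₁ ≤ T₂) (hrate : lam₁ / T₁ = lam₂ / T₂)
    (f₁ : ℝ → ℝ)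
    (hf₁ : ∀ m, f₁ m = -lam₁ + lam₂ + lam₁ * Real.exp (-m * (T₁' / T₁)) -
      lam₂ * Real.exp (-m * (T₁' / T₂))) :
    ∀ m : ℝ, 0 ≤ m → 0 ≤ f₁ m := by
  intro m hm
  have hT₂ : 0 < T₂ := hT₁.trans_le hT
  obtain ⟨c, hc, rfl, rfl⟩ : ∃ c, 0 ≤ c ∧ lam₁ = c * T₁ ∧ lam₂ = c * T₂ :=
    ⟨lam₁ / T₁, by positivity, by field_simp, by rw [hrate]; field_simp⟩
  have hφ := mul_one_sub_exp_neg_div_monotoneOn (x := m * T₁') (by positivity) hT₁ hT₂ hT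
  have hf₁m : f₁ m =
      c * (T₂ * (1 - exp (-(m * T₁' / T₂))) - T₁ * (1 - exp (-(m * T₁' / T₁)))) := by
    rw [hf₁]
    simp only [neg_mul, mul_div_assoc]
    ring
  rw [hf₁m]
  exact mul_nonneg hc (sub_nonneg.2 hφ)

/-- Let `T₁, T₂, T₁', λ₁, λ₂ > 0` with `T₂ ≥ T₁` and `λ₁/T₁ = λ₂/T₂`. Then
`f₁(m) = −λ₁ + λ₂ + λ₁ e^{−m T₁'/T₁} − λ₂ e^{−m T₁'/T₂}` is nonnegative for every `m ≥ 0`. -/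
theorem f₁_nonneg (T₁ T₂ T₁' lam₁ lam₂ : ℝ)
    (hT₁ : 0 < T₁) (hT₂ : 0 < T₂) (hT₁' : 0 < T₁') (hlam₁ : 0 < lam₁) (hlam₂ : 0 < lam₂)
    (hT : T₁ ≤ T₂) (hrate : lam₁ / T₁ = lam₂ / T₂)
    (f₁ : ℝ → ℝ)
    (hf₁ : ∀ m, f₁ m = -lam₁ + lam₂ + lam₁ * Real.exp (-m * (T₁' / T₁)) -
      lam₂ * Real.exp (-m * (T₁' / T₂))) :
    ∀ m : ℝ, 0 ≤ m → 0 ≤ f₁ m :=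
  f₁_nonneg_general T₁ T₂ T₁' lam₁ lam₂ hT₁ hT₁' hlam₁ hT hrate f₁ hf₁
end

section
/- Let T₁, T₂, T₁', T₂', λ₁, λ₂, λ₁', λ₂' > 0 with T₂ ≥ T₁, T₂' ≥ T₁', λ₁/T₁ = λ₂/T₂ and λ₁'/T₁' = λ₂'/T₂'. Define T(m,t,t₁,t₁') = e^{t₁(−λ₁ + λ₂ + λ₁ e^{−m T₁'/T₁} − λ₂ e^{−m T₁'/T₂})} · e^{t₁'(λ₁' e^m − λ₂' e^{m T₁'/T₂'} − λ₁' + λ₂')} · e^{t(λ₂' e^{m T₁'/T₂'} − λ₂ − λ₂' + λ₂ e^{−m T₁'/T₂})}. Then for every m > 0 and all reals t, t₁, t₁' with 0 ≤ t₁ ≤ t and 0 ≤ t₁' ≤ t, one has T(m,t,t₁,t₁') ≤ e^{t((e^m − 1)λ₁' − λ₁ + λ₁ e^{−m T₁'/T₁})}. -/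
open Real

lemma exp_convex_key (x θ : ℝ) (h0 : 0 ≤ θ) (h1 : θ ≤ 1) :
    Real.exp (θ * x) ≤ 1 + θ * (Real.exp x - 1) := by
  have h := convexOn_exp.2 (Set.mem_univ x) (Set.mem_univ (0:ℝ)) h0
    (by linarith : (0:ℝ) ≤ 1 - θ) (by ring)
  simp only [smul_eq_mul, mul_zero, add_zero, Real.exp_zero, mul_one] at h
  linarith

/-- Let `T₁, T₂, T₁', T₂', λ₁, λ₂, λ₁', λ₂' > 0` with `T₂ ≥ T₁`, `T₂' ≥ T₁'`,
`λ₁/T₁ = λ₂/T₂` and `λ₁'/T₁' = λ₂'/T₂'`. With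
`T(m,t,t₁,t₁') = e^{t₁(−λ₁ + λ₂ + λ₁ e^{−m T₁'/T₁} − λ₂ e^{−m T₁'/T₂})}
 · e^{t₁'(λ₁' e^m − λ₂' e^{m T₁'/T₂'} − λ₁' + λ₂')}
 · e^{t(λ₂' e^{m T₁'/T₂'} − λ₂ − λ₂' + λ₂ e^{−m T₁'/T₂})}`,
for every `m > 0` and reals `0 ≤ t₁ ≤ t`, `0 ≤ t₁' ≤ t` we have
`T(m,t,t₁,t₁') ≤ e^{t((e^m − 1) λ₁' − λ₁ + λ₁ e^{−m T₁'/T₁})}`. -/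
theorem T_le_exp (T₁ T₂ T₁' T₂' lam₁ lam₂ lam₁' lam₂' : ℝ)
    (hT₁ : 0 < T₁) (hT₂ : 0 < T₂) (hT₁' : 0 < T₁') (hT₂' : 0 < T₂')
    (hlam₁ : 0 < lam₁) (hlam₂ : 0 < lam₂) (hlam₁' : 0 < lam₁') (hlam₂' : 0 < lam₂')
    (hT : T₁ ≤ T₂) (hT' : T₁' ≤ T₂')
    (hrate : lam₁ / T₁ = lam₂ / T₂) (hrate' : lam₁' / T₁' = lam₂' / T₂')
    (Tf : ℝ → ℝ → ℝ → ℝ → ℝ)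
    (hTf : ∀ m t t₁ t₁', Tf m t t₁ t₁' =
      Real.exp (t₁ * (-lam₁ + lam₂ + lam₁ * Real.exp (-m * (T₁' / T₁)) -
          lam₂ * Real.exp (-m * (T₁' / T₂)))) *
        Real.exp (t₁' * (lam₁' * Real.exp m - lam₂' * Real.exp (m * (T₁' / T₂')) -
          lam₁' + lam₂')) *
        Real.exp (t * (lam₂' * Real.exp (m * (T₁' / T₂')) - lam₂ - lam₂' +
          lam₂ * Real.exp (-m * (T₁' / T₂))))) :
    ∀ m t t₁ t₁' : ℝ, 0 < m → 0 ≤ t₁ → t₁ ≤ t → 0 ≤ t₁' → t₁' ≤ t →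
      Tf m t t₁ t₁' ≤
        Real.exp (t * ((Real.exp m - 1) * lam₁' - lam₁ +
          lam₁ * Real.exp (-m * (T₁' / T₁)))) := by
  intro m t t₁ t₁' hm ht₁0 ht₁t ht₁'0 ht₁'t
  rw [hTf, ← Real.exp_add, ← Real.exp_add, Real.exp_le_exp]
  -- relations from the rate hypotheses
  have hlam : lam₁ = lam₂ * (T₁ / T₂) := by
    field_simp at hrate ⊢; linarith [hrate]
  have hlam' : lam₁' = lam₂' * (T₁' / T₂') := by
    field_simp at hrate' ⊢; linarith [hrate']
  -- A ≥ 0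
  have hA : 0 ≤ -lam₁ + lam₂ + lam₁ * Real.exp (-m * (T₁' / T₁)) -
      lam₂ * Real.exp (-m * (T₁' / T₂)) := by
    have hθ : (0:ℝ) ≤ T₁ / T₂ := le_of_lt (div_pos hT₁ hT₂)
    have hθ1 : T₁ / T₂ ≤ 1 := (div_le_one hT₂).2 hT
    have key := exp_convex_key (-m * (T₁' / T₁)) (T₁ / T₂) hθ hθ1
    have harg : T₁ / T₂ * (-m * (T₁' / T₁)) = -m * (T₁' / T₂) := by
      field_simp
    rw [harg] at key
    have hmul := mul_le_mul_of_nonneg_left key (le_of_lt hlam₂)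
    rw [hlam]
    nlinarith [Real.exp_pos (-m * (T₁' / T₁))]
  -- B ≥ 0
  have hB : 0 ≤ lam₁' * Real.exp m - lam₂' * Real.exp (m * (T₁' / T₂')) -
      lam₁' + lam₂' := by
    have hθ : (0:ℝ) ≤ T₁' / T₂' := le_of_lt (div_pos hT₁' hT₂')
    have hθ1 : T₁' / T₂' ≤ 1 := (div_le_one hT₂').2 hT'
    have key := exp_convex_key m (T₁' / T₂') hθ hθ1
    have harg : T₁' / T₂' * m = m * (T₁' / T₂') := by ring
    rw [harg] at key
    have hmul := mul_le_mul_of_nonneg_left key (le_of_lt hlam₂')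
    rw [hlam']
    nlinarith [Real.exp_pos m]
  nlinarith [mul_nonneg (sub_nonneg.2 ht₁t) hA, mul_nonneg (sub_nonneg.2 ht₁'t) hB]
end

section
/- (Theorem 1, quantitative form) Fix T₁, T₂, T₁', T₂', λ₁, λ₂, λ₁', λ₂' > 0 with T₂ ≥ T₁ and T₂' ≥ T₁'. Let t > 0, 0 ≤ t₁ ≤ t, 0 ≤ t₁' ≤ t, and set t₂ = t − t₁, t₂' = t − t₁'. Let N₁, N₂, N₁', N₂' be independent random variables with Poisson distributions of rates λ₁t₁, λ₂t₂, λ₁'t₁', λ₂'t₂' respectively. Then for every m > 0, P{ N₁'/T₁' + N₂'/T₂' > N₁/T₁ + N₂/T₂ } ≤ e^{λ₁ t₁ e^{−m T₁'/T₁}} · e^{λ₂ t₂ e^{−m T₁'/T₂}} · e^{λ₁' t₁' (e^m − 1)} · e^{λ₂' t₂' e^{m T₁'/T₂'}} · e^{−λ₁ t₁ − λ₂ t₂ − λ₂' t₂'}. -/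
open Real

/-- The probability mass function of a Poisson distribution with rate `μ ≥ 0`:
`P(N = n) = e^{-μ} μ^n / n!` (for rate `0` this puts all mass on `n = 0`). -/
noncomputable def poissonPMF (μ : ℝ) (n : ℕ) : ℝ :=
  Real.exp (-μ) * μ ^ n / n.factorial

lemma poissonPMF_nonneg {μ : ℝ} (hμ : 0 ≤ μ) (n : ℕ) : 0 ≤ poissonPMF μ n := by
  unfold poissonPMF; positivity

lemma poisson_tilt (μ c : ℝ) (n : ℕ) :
    poissonPMF μ n * Real.exp (c * n) = Real.exp (-μ) * ((μ * Real.exp c) ^ n / n.factorial) := by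
  unfold poissonPMF
  rw [mul_comm c (n : ℝ), Real.exp_nat_mul, mul_pow]
  ring

lemma summable_tilt (μ c : ℝ) :
    Summable (fun n : ℕ => poissonPMF μ n * Real.exp (c * n)) := by
  simp only [poisson_tilt]
  exact (Real.summable_pow_div_factorial _).mul_left _

lemma poisson_mgf (μ c : ℝ) :
    ∑' n : ℕ, poissonPMF μ n * Real.exp (c * n) = Real.exp (μ * Real.exp c - μ) := by
  simp only [poisson_tilt]
  rw [tsum_mul_left]
  have h : (∑' n : ℕ, (μ * Real.exp c) ^ n / n.factorial) = Real.exp (μ * Real.exp c) := by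
    rw [Real.exp_eq_exp_ℝ, NormedSpace.exp_eq_tsum_div]
  rw [h, ← Real.exp_add]
  ring_nf

set_option maxHeartbeats 1000000 in
lemma tsum_prod_mul {α β : Type*} {f : α → ℝ} {g : β → ℝ} (hf : Summable f) (hg : Summable g)
    (hf0 : ∀ a, 0 ≤ f a) (hg0 : ∀ b, 0 ≤ g b) :
    ∑' p : α × β, f p.1 * g p.2 = (∑' a, f a) * (∑' b, g b) := by
  have h1 : ∀ b : α, Summable fun c : β => f b * g c := fun b => hg.mul_left (f b)
  rw [Summable.tsum_prod' (hf.mul_of_nonneg hg hf0 hg0) h1]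
  simp_rw [tsum_mul_left]
  rw [tsum_mul_right]

set_option maxHeartbeats 1000000 in
/-- Theorem 1, quantitative form: with `N₁, N₂, N₁', N₂'` independent Poisson
random variables of rates `λ₁t₁, λ₂t₂, λ₁'t₁', λ₂'t₂'` (so that their joint distribution is
the product of the marginals), for every `m > 0`,
`P{N₁'/T₁' + N₂'/T₂' > N₁/T₁ + N₂/T₂}
  ≤ e^{λ₁t₁e^{−mT₁'/T₁}} e^{λ₂t₂e^{−mT₁'/T₂}} e^{λ₁'t₁'(e^m−1)} e^{λ₂'t₂'e^{mT₁'/T₂'}}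
    e^{−λ₁t₁−λ₂t₂−λ₂'t₂'}`. -/
theorem theorem1_quantitative (T₁ T₂ T₁' T₂' lam₁ lam₂ lam₁' lam₂' : ℝ)
    (hT₁ : 0 < T₁) (hT₂ : 0 < T₂) (hT₁' : 0 < T₁') (hT₂' : 0 < T₂')
    (hlam₁ : 0 < lam₁) (hlam₂ : 0 < lam₂) (hlam₁' : 0 < lam₁') (hlam₂' : 0 < lam₂')
    (hT : T₁ ≤ T₂) (hT' : T₁' ≤ T₂')
    (t t₁ t₁' t₂ t₂' : ℝ) (ht : 0 < t)
    (ht₁0 : 0 ≤ t₁) (ht₁t : t₁ ≤ t) (ht₁'0 : 0 ≤ t₁') (ht₁'t : t₁' ≤ t)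
    (ht₂ : t₂ = t - t₁) (ht₂' : t₂' = t - t₁') :
    ∀ m : ℝ, 0 < m →
      (∑' q : ℕ × ℕ × ℕ × ℕ,
          if (q.2.2.1 : ℝ) / T₁' + (q.2.2.2 : ℝ) / T₂' > (q.1 : ℝ) / T₁ + (q.2.1 : ℝ) / T₂
          then poissonPMF (lam₁ * t₁) q.1 * poissonPMF (lam₂ * t₂) q.2.1 *
            poissonPMF (lam₁' * t₁') q.2.2.1 * poissonPMF (lam₂' * t₂') q.2.2.2
          else 0) ≤
        Real.exp (lam₁ * t₁ * Real.exp (-m * (T₁' / T₁))) *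
          Real.exp (lam₂ * t₂ * Real.exp (-m * (T₁' / T₂))) *
          Real.exp (lam₁' * t₁' * (Real.exp m - 1)) *
          Real.exp (lam₂' * t₂' * Real.exp (m * (T₁' / T₂'))) *
          Real.exp (-(lam₁ * t₁) - lam₂ * t₂ - lam₂' * t₂') := by
  intro m hm
  have ht₂0 : 0 ≤ t₂ := by rw [ht₂]; linarith
  have ht₂'0 : 0 ≤ t₂' := by rw [ht₂']; linarith
  have hμ₁ : 0 ≤ lam₁ * t₁ := mul_nonneg hlam₁.le ht₁0
  have hμ₂ : 0 ≤ lam₂ * t₂ := mul_nonneg hlam₂.le ht₂0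
  have hμ₃ : 0 ≤ lam₁' * t₁' := mul_nonneg hlam₁'.le ht₁'0
  have hμ₄ : 0 ≤ lam₂' * t₂' := mul_nonneg hlam₂'.le ht₂'0
  set c₁ : ℝ := -m * (T₁' / T₁) with hc₁
  set c₂ : ℝ := -m * (T₁' / T₂) with hc₂
  set c₃ : ℝ := m with hc₃
  set c₄ : ℝ := m * (T₁' / T₂') with hc₄
  set f₁ : ℕ → ℝ := fun n => poissonPMF (lam₁ * t₁) n * Real.exp (c₁ * n) with hf₁
  set f₂ : ℕ → ℝ := fun n => poissonPMF (lam₂ * t₂) n * Real.exp (c₂ * n) with hf₂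
  set f₃ : ℕ → ℝ := fun n => poissonPMF (lam₁' * t₁') n * Real.exp (c₃ * n) with hf₃
  set f₄ : ℕ → ℝ := fun n => poissonPMF (lam₂' * t₂') n * Real.exp (c₄ * n) with hf₄
  have hf₁0 : ∀ n, 0 ≤ f₁ n := fun n =>
    mul_nonneg (poissonPMF_nonneg hμ₁ n) (Real.exp_nonneg _)
  have hf₂0 : ∀ n, 0 ≤ f₂ n := fun n =>
    mul_nonneg (poissonPMF_nonneg hμ₂ n) (Real.exp_nonneg _)
  have hf₃0 : ∀ n, 0 ≤ f₃ n := fun n =>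
    mul_nonneg (poissonPMF_nonneg hμ₃ n) (Real.exp_nonneg _)
  have hf₄0 : ∀ n, 0 ≤ f₄ n := fun n =>
    mul_nonneg (poissonPMF_nonneg hμ₄ n) (Real.exp_nonneg _)
  set g : ℕ × ℕ × ℕ × ℕ → ℝ := fun q => f₁ q.1 * (f₂ q.2.1 * (f₃ q.2.2.1 * f₄ q.2.2.2))
    with hg
  have hg0 : ∀ q, 0 ≤ g q := fun q =>
    mul_nonneg (hf₁0 _) (mul_nonneg (hf₂0 _) (mul_nonneg (hf₃0 _) (hf₄0 _)))
  -- pointwise bound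
  have hpoint : ∀ q : ℕ × ℕ × ℕ × ℕ,
      (if (q.2.2.1 : ℝ) / T₁' + (q.2.2.2 : ℝ) / T₂' > (q.1 : ℝ) / T₁ + (q.2.1 : ℝ) / T₂
        then poissonPMF (lam₁ * t₁) q.1 * poissonPMF (lam₂ * t₂) q.2.1 *
          poissonPMF (lam₁' * t₁') q.2.2.1 * poissonPMF (lam₂' * t₂') q.2.2.2
        else 0) ≤ g q := by
    rintro ⟨n₁, n₂, n₃, n₄⟩
    by_cases hcond : (n₃ : ℝ) / T₁' + (n₄ : ℝ) / T₂' > (n₁ : ℝ) / T₁ + (n₂ : ℝ) / T₂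
    · rw [if_pos hcond]
      have hE : 0 ≤ c₁ * n₁ + c₂ * n₂ + c₃ * n₃ + c₄ * n₄ := by
        have heq : c₁ * n₁ + c₂ * n₂ + c₃ * n₃ + c₄ * n₄ =
            m * T₁' * ((n₃ : ℝ) / T₁' + (n₄ : ℝ) / T₂' - ((n₁ : ℝ) / T₁ + (n₂ : ℝ) / T₂)) := by
          rw [hc₁, hc₂, hc₃, hc₄]
          field_simp
          ring
        rw [heq]
        apply mul_nonneg (mul_nonneg hm.le hT₁'.le)
        linarith
      have hpm : 0 ≤ poissonPMF (lam₁ * t₁) n₁ * poissonPMF (lam₂ * t₂) n₂ *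
          poissonPMF (lam₁' * t₁') n₃ * poissonPMF (lam₂' * t₂') n₄ :=
        mul_nonneg (mul_nonneg (mul_nonneg (poissonPMF_nonneg hμ₁ _)
          (poissonPMF_nonneg hμ₂ _)) (poissonPMF_nonneg hμ₃ _)) (poissonPMF_nonneg hμ₄ _)
      have hgq : g (n₁, n₂, n₃, n₄) =
          poissonPMF (lam₁ * t₁) n₁ * poissonPMF (lam₂ * t₂) n₂ *
            poissonPMF (lam₁' * t₁') n₃ * poissonPMF (lam₂' * t₂') n₄ *
            Real.exp (c₁ * n₁ + c₂ * n₂ + c₃ * n₃ + c₄ * n₄) := by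
        simp only [hg, hf₁, hf₂, hf₃, hf₄, Real.exp_add]
        ring
      rw [hgq]
      nth_rewrite 1 [← mul_one (poissonPMF (lam₁ * t₁) n₁ * poissonPMF (lam₂ * t₂) n₂ *
        poissonPMF (lam₁' * t₁') n₃ * poissonPMF (lam₂' * t₂') n₄)]
      exact mul_le_mul_of_nonneg_left (Real.one_le_exp hE) hpm
    · rw [if_neg hcond]; exact hg0 _
  -- summability
  have hs₁ : Summable f₁ := summable_tilt _ _
  have hs₂ : Summable f₂ := summable_tilt _ _
  have hs₃ : Summable f₃ := summable_tilt _ _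
  have hs₄ : Summable f₄ := summable_tilt _ _
  have hs34 : Summable (fun p : ℕ × ℕ => f₃ p.1 * f₄ p.2) :=
    hs₃.mul_of_nonneg hs₄ hf₃0 hf₄0
  have h340 : ∀ p : ℕ × ℕ, 0 ≤ f₃ p.1 * f₄ p.2 := fun p => mul_nonneg (hf₃0 _) (hf₄0 _)
  have hs234 : Summable (fun p : ℕ × ℕ × ℕ => f₂ p.1 * (f₃ p.2.1 * f₄ p.2.2)) :=
    hs₂.mul_of_nonneg hs34 hf₂0 h340
  have h2340 : ∀ p : ℕ × ℕ × ℕ, 0 ≤ f₂ p.1 * (f₃ p.2.1 * f₄ p.2.2) := fun p =>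
    mul_nonneg (hf₂0 _) (h340 _)
  have hsg : Summable g := hs₁.mul_of_nonneg hs234 hf₁0 h2340
  have hslhs : Summable (fun q : ℕ × ℕ × ℕ × ℕ =>
      if (q.2.2.1 : ℝ) / T₁' + (q.2.2.2 : ℝ) / T₂' > (q.1 : ℝ) / T₁ + (q.2.1 : ℝ) / T₂
      then poissonPMF (lam₁ * t₁) q.1 * poissonPMF (lam₂ * t₂) q.2.1 *
        poissonPMF (lam₁' * t₁') q.2.2.1 * poissonPMF (lam₂' * t₂') q.2.2.2
      else 0) := by
    apply Summable.of_nonneg_of_le _ hpoint hsg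
    rintro ⟨n₁, n₂, n₃, n₄⟩
    dsimp only
    split
    · exact mul_nonneg (mul_nonneg (mul_nonneg (poissonPMF_nonneg hμ₁ _)
        (poissonPMF_nonneg hμ₂ _)) (poissonPMF_nonneg hμ₃ _)) (poissonPMF_nonneg hμ₄ _)
    · exact le_refl 0
  -- compute ∑' g
  have htsumg : ∑' q, g q = (∑' n, f₁ n) * ((∑' n, f₂ n) * ((∑' n, f₃ n) * (∑' n, f₄ n))) := by
    rw [hg]
    rw [tsum_prod_mul hs₁ hs234 hf₁0 h2340]
    congr 1
    rw [tsum_prod_mul hs₂ hs34 hf₂0 h340]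
    congr 1
    rw [tsum_prod_mul hs₃ hs₄ hf₃0 hf₄0]
  calc (∑' q : ℕ × ℕ × ℕ × ℕ,
          if (q.2.2.1 : ℝ) / T₁' + (q.2.2.2 : ℝ) / T₂' > (q.1 : ℝ) / T₁ + (q.2.1 : ℝ) / T₂
          then poissonPMF (lam₁ * t₁) q.1 * poissonPMF (lam₂ * t₂) q.2.1 *
            poissonPMF (lam₁' * t₁') q.2.2.1 * poissonPMF (lam₂' * t₂') q.2.2.2
          else 0)
      ≤ ∑' q, g q := Summable.tsum_le_tsum hpoint hslhs hsg
    _ = _ := by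
        rw [htsumg, hf₁, hf₂, hf₃, hf₄, poisson_mgf, poisson_mgf, poisson_mgf, poisson_mgf]
        rw [← Real.exp_add, ← Real.exp_add, ← Real.exp_add,
          ← Real.exp_add, ← Real.exp_add, ← Real.exp_add, ← Real.exp_add]
        congr 1
        rw [hc₁, hc₂, hc₃, hc₄]
        ring
end

section
/- (Theorem 3, tail bound, Equation (eq_s)) Let M_a, M_h be positive reals with M_a + M_h = 1 and M_a < M_h, and let α ≥ 1 be a natural number. Then Σ_{i=⌈α/2⌉}^{α} C(α, i) · M_a^i · M_h^{α−i} < (M_a · M_h)^{(α−1)/2} · 2^{α−1}, where C(α, i) denotes the binomial coefficient. -/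
open Real Finset

/-- Theorem 3, tail bound, Equation (eq_s): for positive reals
`M_a + M_h = 1` with `M_a < M_h` and a natural number `α ≥ 1`,
`Σ_{i=⌈α/2⌉}^{α} C(α, i) M_a^i M_h^{α−i} < (M_a M_h)^{(α−1)/2} · 2^{α−1}`.
For a natural number `α`, `⌈α/2⌉ = (α + 1) / 2` (natural division). -/
theorem theorem3_tail_bound (Ma Mh : ℝ) (hMa : 0 < Ma) (hMh : 0 < Mh)
    (hsum : Ma + Mh = 1) (hlt : Ma < Mh) (α : ℕ) (hα : 1 ≤ α) :
    ∑ i ∈ Finset.Icc ((α + 1) / 2) α, (α.choose i : ℝ) * Ma ^ i * Mh ^ (α - i) <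
      (Ma * Mh) ^ (((α : ℝ) - 1) / 2) * 2 ^ (α - 1) := by
  set m := (α + 1) / 2 with hm
  have hle : Ma ≤ Mh := hlt.le
  have hprod : 0 < Ma * Mh := mul_pos hMa hMh
  have h2Ma : 2 * Ma < 1 := by linarith
  -- termwise bound
  have hterm : ∀ i ∈ Finset.Icc m α, (α.choose i : ℝ) * Ma ^ i * Mh ^ (α - i)
      ≤ (α.choose i : ℝ) * (Ma ^ m * Mh ^ (α - m)) := by
    intro i hi
    obtain ⟨hmi, hiα⟩ := Finset.mem_Icc.mp hi
    have h1 : Ma ^ i * Mh ^ (α - i) ≤ Ma ^ m * Mh ^ (α - m) := by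
      have e1 : Ma ^ i = Ma ^ m * Ma ^ (i - m) := by
        rw [← pow_add]; congr 1; omega
      have h2 : Ma ^ (i - m) ≤ Mh ^ (i - m) := pow_le_pow_left₀ hMa.le hle _
      have h3 : Mh ^ (i - m) * Mh ^ (α - i) = Mh ^ (α - m) := by
        rw [← pow_add]; congr 1; omega
      calc Ma ^ i * Mh ^ (α - i) = Ma ^ m * Ma ^ (i - m) * Mh ^ (α - i) := by rw [e1]
        _ ≤ Ma ^ m * Mh ^ (i - m) * Mh ^ (α - i) := by
            exact mul_le_mul_of_nonneg_right
              (mul_le_mul_of_nonneg_left h2 (pow_nonneg hMa.le m))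
              (pow_nonneg hMh.le _)
        _ = Ma ^ m * Mh ^ (α - m) := by rw [mul_assoc, h3]
    calc (α.choose i : ℝ) * Ma ^ i * Mh ^ (α - i)
        = (α.choose i : ℝ) * (Ma ^ i * Mh ^ (α - i)) := by ring
      _ ≤ _ := mul_le_mul_of_nonneg_left h1 (Nat.cast_nonneg _)
  have hSnat : ∑ i ∈ Finset.Icc m α, α.choose i ≤ 2 ^ α := by
    calc ∑ i ∈ Finset.Icc m α, α.choose i
        ≤ ∑ i ∈ Finset.range (α + 1), α.choose i := by
          apply Finset.sum_le_sum_of_subset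
          intro x hx
          simp only [Finset.mem_Icc, Finset.mem_range] at *
          omega
      _ = 2 ^ α := Nat.sum_range_choose α
  have hS : (∑ i ∈ Finset.Icc m α, (α.choose i : ℝ)) ≤ 2 ^ α := by
    calc (∑ i ∈ Finset.Icc m α, (α.choose i : ℝ))
        = ((∑ i ∈ Finset.Icc m α, α.choose i : ℕ) : ℝ) := by push_cast; rfl
      _ ≤ ((2 ^ α : ℕ) : ℝ) := by exact_mod_cast hSnat
      _ = 2 ^ α := by push_cast; rfl
  have hmain : ∑ i ∈ Finset.Icc m α, (α.choose i : ℝ) * Ma ^ i * Mh ^ (α - i)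
      ≤ 2 ^ α * (Ma ^ m * Mh ^ (α - m)) := by
    calc ∑ i ∈ Finset.Icc m α, (α.choose i : ℝ) * Ma ^ i * Mh ^ (α - i)
        ≤ ∑ i ∈ Finset.Icc m α, (α.choose i : ℝ) * (Ma ^ m * Mh ^ (α - m)) :=
          Finset.sum_le_sum hterm
      _ = (∑ i ∈ Finset.Icc m α, (α.choose i : ℝ)) * (Ma ^ m * Mh ^ (α - m)) := by
          rw [Finset.sum_mul]
      _ ≤ 2 ^ α * (Ma ^ m * Mh ^ (α - m)) :=
          mul_le_mul_of_nonneg_right hS (by positivity)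
  refine lt_of_le_of_lt hmain ?_
  have h2pow : (2 : ℝ) ^ α = 2 * 2 ^ (α - 1) := by
    rw [← pow_succ']; congr 1; omega
  rcases Nat.even_or_odd α with ⟨k, hk⟩ | ⟨k, hk⟩
  · -- even case: α = 2k, k ≥ 1, m = k
    have hk' : α = 2 * k := by omega
    have hm' : m = k := by omega
    have hαm : α - m = k := by omega
    have hk1 : 1 ≤ k := by omega
    have hA : (0 : ℝ) < (Ma * Mh) ^ (((α : ℝ) - 1) / 2) :=
      Real.rpow_pos_of_pos hprod _
    have hsplit : (Ma * Mh) ^ ((k : ℕ) : ℝ)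
        = (Ma * Mh) ^ (((α : ℝ) - 1) / 2) * (Ma * Mh) ^ ((1 : ℝ) / 2) := by
      rw [← Real.rpow_add hprod]; congr 1; push_cast [hk']; ring
    have hc : (Ma * Mh) ^ ((1 : ℝ) / 2) < 1 / 2 := by
      rw [← Real.sqrt_eq_rpow]
      rw [show (1:ℝ)/2 = Real.sqrt (1/4) by
        rw [show (1:ℝ)/4 = (1/2)^2 by norm_num, Real.sqrt_sq (by norm_num)]]
      apply Real.sqrt_lt_sqrt hprod.le
      nlinarith [mul_pos (sub_pos.2 hlt) (sub_pos.2 hlt)]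
    have hpow2 : (0 : ℝ) < 2 ^ (α - 1) := by positivity
    have key : ((Ma * Mh) ^ (((α : ℝ) - 1) / 2) * 2 ^ (α - 1)) * (2 * (Ma * Mh) ^ ((1:ℝ)/2))
        < ((Ma * Mh) ^ (((α : ℝ) - 1) / 2) * 2 ^ (α - 1)) * 1 := by
      apply mul_lt_mul_of_pos_left (by linarith) (mul_pos hA hpow2)
    calc (2:ℝ) ^ α * (Ma ^ m * Mh ^ (α - m))
        = 2 ^ α * (Ma * Mh) ^ ((k : ℕ) : ℝ) := by
          rw [hαm, hm', Real.rpow_natCast, mul_pow]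
      _ = ((Ma * Mh) ^ (((α : ℝ) - 1) / 2) * 2 ^ (α - 1)) * (2 * (Ma * Mh) ^ ((1:ℝ)/2)) := by
          rw [hsplit, h2pow]; ring
      _ < ((Ma * Mh) ^ (((α : ℝ) - 1) / 2) * 2 ^ (α - 1)) * 1 := key
      _ = (Ma * Mh) ^ (((α : ℝ) - 1) / 2) * 2 ^ (α - 1) := by ring
  · -- odd case: α = 2k+1, m = k+1
    have hk' : α = 2 * k + 1 := by omega
    have hm' : m = k + 1 := by omega
    have hαm : α - m = k := by omega
    have hA : (Ma * Mh) ^ (((α : ℝ) - 1) / 2) = (Ma * Mh) ^ k := by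
      rw [show ((α : ℝ) - 1) / 2 = ((k : ℕ) : ℝ) by push_cast [hk']; ring,
        Real.rpow_natCast]
    have hX : (0 : ℝ) < (Ma * Mh) ^ k * 2 ^ (α - 1) := by positivity
    have key : (2 * Ma) * ((Ma * Mh) ^ k * 2 ^ (α - 1))
        < 1 * ((Ma * Mh) ^ k * 2 ^ (α - 1)) :=
      mul_lt_mul_of_pos_right h2Ma hX
    calc (2:ℝ) ^ α * (Ma ^ m * Mh ^ (α - m))
        = (2 * Ma) * ((Ma * Mh) ^ k * 2 ^ (α - 1)) := by
          rw [hαm, hm', h2pow, mul_pow, pow_succ]; ring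
      _ < 1 * ((Ma * Mh) ^ k * 2 ^ (α - 1)) := key
      _ = (Ma * Mh) ^ (((α : ℝ) - 1) / 2) * 2 ^ (α - 1) := by rw [hA]; ring
end

section
/- (Theorem 3, exponential form) Let M_a, M_h be positive reals with M_a + M_h = 1 and M_a < M_h, and set s = −log₂(M_a · M_h) − 2. Then s > 0, and for every natural number α ≥ 1, Σ_{i=⌈α/2⌉}^{α} C(α, i) · M_a^i · M_h^{α−i} < 2^{−s(α−1)/2}. -/
open Real Finset

/-- Theorem 3, exponential form: for positive reals `M_a + M_h = 1` with
`M_a < M_h`, setting `s = −log₂(M_a M_h) − 2`, we have `s > 0` and, for every natural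
`α ≥ 1`, `Σ_{i=⌈α/2⌉}^{α} C(α, i) M_a^i M_h^{α−i} < 2^{−s(α−1)/2}`.
For a natural number `α`, `⌈α/2⌉ = (α + 1) / 2` (natural division). -/
theorem theorem3_exponential (Ma Mh : ℝ) (hMa : 0 < Ma) (hMh : 0 < Mh)
    (hsum : Ma + Mh = 1) (hlt : Ma < Mh)
    (s : ℝ) (hs : s = -Real.logb 2 (Ma * Mh) - 2) :
    0 < s ∧ ∀ α : ℕ, 1 ≤ α →
      ∑ i ∈ Finset.Icc ((α + 1) / 2) α, (α.choose i : ℝ) * Ma ^ i * Mh ^ (α - i) <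
        (2 : ℝ) ^ (-(s * ((α : ℝ) - 1) / 2)) := by
  have hx : 0 < Ma * Mh := mul_pos hMa hMh
  have hx4 : Ma * Mh < 1/4 := by nlinarith
  have h14 : Real.logb 2 (1/4 : ℝ) = -2 := by
    rw [show (1/4 : ℝ) = (2:ℝ) ^ (-2 : ℝ) by
      rw [show (-2:ℝ) = ((-2:ℤ):ℝ) by norm_num, Real.rpow_intCast]
      norm_num]
    exact Real.logb_rpow (by norm_num) (by norm_num)
  have hlog : Real.logb 2 (Ma * Mh) < -2 := by
    have := Real.logb_lt_logb (b := 2) (by norm_num) hx hx4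
    rwa [h14] at this
  have hspos : 0 < s := by rw [hs]; linarith
  refine ⟨hspos, fun α hα => ?_⟩
  set k := (α + 1) / 2 with hk
  set x := Ma * Mh with hxdef
  -- each term bound
  have key : ∀ i ∈ Finset.Icc k α, Ma ^ i * Mh ^ (α - i) ≤ x ^ ((α : ℝ)/2) := by
    intro i hi
    obtain ⟨hki, hiα⟩ := Finset.mem_Icc.mp hi
    have h2i : α ≤ 2 * i := by omega
    have hι : (α : ℝ)/2 ≤ (i : ℝ) := by
      have : (α : ℝ) ≤ 2 * i := by exact_mod_cast h2i
      linarith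
    have hcast : (Ma ^ i * Mh ^ (α - i) : ℝ)
        = Ma ^ (i : ℝ) * Mh ^ ((α : ℝ) - (i : ℝ)) := by
      rw [← Real.rpow_natCast Ma, ← Real.rpow_natCast Mh]
      congr 1
      rw [Nat.cast_sub hiα]
    have hsplit : Ma ^ (i : ℝ) * Mh ^ ((α : ℝ) - (i : ℝ))
        = x ^ ((α : ℝ)/2) * (Ma / Mh) ^ ((i : ℝ) - (α : ℝ)/2) := by
      rw [hxdef, Real.mul_rpow hMa.le hMh.le, Real.div_rpow hMa.le hMh.le,
        div_eq_mul_inv (Ma ^ ((i : ℝ) - (α : ℝ)/2)) (Mh ^ ((i : ℝ) - (α : ℝ)/2)),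
        ← Real.rpow_neg hMh.le, mul_mul_mul_comm,
        ← Real.rpow_add hMa, ← Real.rpow_add hMh]
      congr 1 <;> [skip; congr 1] <;> ring
    have hle1 : (Ma / Mh) ^ ((i : ℝ) - (α : ℝ)/2) ≤ 1 :=
      Real.rpow_le_one (by positivity) (by
        rw [div_le_one hMh]; exact hlt.le) (by linarith)
    calc Ma ^ i * Mh ^ (α - i)
        = x ^ ((α : ℝ)/2) * (Ma / Mh) ^ ((i : ℝ) - (α : ℝ)/2) := by
          rw [hcast, hsplit]
      _ ≤ x ^ ((α : ℝ)/2) * 1 := by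
          apply mul_le_mul_of_nonneg_left hle1 (by positivity)
      _ = x ^ ((α : ℝ)/2) := by ring
  have hchoose : (∑ i ∈ Finset.Icc k α, (α.choose i : ℝ)) ≤ 2 ^ α := by
    have hnat : (∑ i ∈ Finset.Icc k α, α.choose i) ≤ 2 ^ α := by
      calc (∑ i ∈ Finset.Icc k α, α.choose i)
          ≤ ∑ i ∈ Finset.range (α + 1), α.choose i := by
            apply Finset.sum_le_sum_of_subset
            intro j hj
            simp only [Finset.mem_Icc, Finset.mem_range] at *
            omega
        _ = 2 ^ α := Nat.sum_range_choose α
    exact_mod_cast hnat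
  have hxpow_pos : (0:ℝ) < x ^ ((α : ℝ)/2) := Real.rpow_pos_of_pos hx _
  have hbound : ∑ i ∈ Finset.Icc k α, (α.choose i : ℝ) * Ma ^ i * Mh ^ (α - i)
      ≤ (2:ℝ) ^ α * x ^ ((α : ℝ)/2) := by
    calc ∑ i ∈ Finset.Icc k α, (α.choose i : ℝ) * Ma ^ i * Mh ^ (α - i)
        ≤ ∑ i ∈ Finset.Icc k α, (α.choose i : ℝ) * x ^ ((α : ℝ)/2) := by
          apply Finset.sum_le_sum
          intro i hi
          rw [mul_assoc]
          exact mul_le_mul_of_nonneg_left (key i hi) (by positivity)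
      _ = (∑ i ∈ Finset.Icc k α, (α.choose i : ℝ)) * x ^ ((α : ℝ)/2) := by
          rw [Finset.sum_mul]
      _ ≤ (2:ℝ) ^ α * x ^ ((α : ℝ)/2) := by
          exact mul_le_mul_of_nonneg_right hchoose hxpow_pos.le
  have hrewrite : (2:ℝ) ^ α * x ^ ((α : ℝ)/2) = (2:ℝ) ^ (-(s * (α : ℝ) / 2)) := by
    have hxr : x = (2:ℝ) ^ (Real.logb 2 x) := (Real.rpow_logb (by norm_num) (by norm_num) hx).symm
    calc (2:ℝ) ^ α * x ^ ((α : ℝ)/2)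
        = (2:ℝ) ^ (α : ℝ) * ((2:ℝ) ^ (Real.logb 2 x)) ^ ((α : ℝ)/2) := by
          rw [← hxr, Real.rpow_natCast]
      _ = (2:ℝ) ^ ((α : ℝ) + Real.logb 2 x * ((α : ℝ)/2)) := by
          rw [← Real.rpow_mul (by norm_num), ← Real.rpow_add (by norm_num)]
      _ = (2:ℝ) ^ (-(s * (α : ℝ) / 2)) := by
          congr 1
          rw [hs, hxdef]
          ring
  have hfinal : (2:ℝ) ^ (-(s * (α : ℝ) / 2)) < (2:ℝ) ^ (-(s * ((α : ℝ) - 1) / 2)) := by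
    apply Real.rpow_lt_rpow_left_iff (x := 2) (by norm_num) |>.mpr
    have : s * ((α : ℝ) - 1) < s * (α : ℝ) := by nlinarith
    linarith
  calc ∑ i ∈ Finset.Icc k α, (α.choose i : ℝ) * Ma ^ i * Mh ^ (α - i)
      ≤ (2:ℝ) ^ α * x ^ ((α : ℝ)/2) := hbound
    _ = (2:ℝ) ^ (-(s * (α : ℝ) / 2)) := hrewrite
    _ < (2:ℝ) ^ (-(s * ((α : ℝ) - 1) / 2)) := hfinal
end

section
/- If M_a, M_h are positive reals with M_a + M_h = 1 and M_a < M_h, and α ≥ 1 is a natural number, then M_a^{⌈α/2⌉} · Σ_{i=⌈α/2⌉}^{α} C(α, i) · M_h^{⌊α/2⌋} ≤ (M_a · M_h)^{(α−1)/2} · 2^{α−1}. -/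
open Real Finset

/-- for positive reals `M_a + M_h = 1` with `M_a < M_h` and a natural
`α ≥ 1`, `M_a^{⌈α/2⌉} · Σ_{i=⌈α/2⌉}^{α} C(α, i) M_h^{⌊α/2⌋}
 ≤ (M_a M_h)^{(α−1)/2} · 2^{α−1}`.
For a natural number `α`, `⌈α/2⌉ = (α + 1) / 2` and `⌊α/2⌋ = α / 2` (natural division). -/
theorem final_estimation_step (Ma Mh : ℝ) (hMa : 0 < Ma) (hMh : 0 < Mh)
    (hsum : Ma + Mh = 1) (hlt : Ma < Mh) (α : ℕ) (hα : 1 ≤ α) :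
    Ma ^ ((α + 1) / 2) *
        ∑ i ∈ Finset.Icc ((α + 1) / 2) α, (α.choose i : ℝ) * Mh ^ (α / 2) ≤
      (Ma * Mh) ^ (((α : ℝ) - 1) / 2) * 2 ^ (α - 1) := by
  have hMa2 : Ma ≤ 1/2 := by linarith
  have hp : 0 < Ma * Mh := mul_pos hMa hMh
  have hp4 : Ma * Mh ≤ 1/4 := by nlinarith [sq_nonneg (Ma - Mh)]
  set S : ℝ := ∑ i ∈ Finset.Icc ((α + 1) / 2) α, (α.choose i : ℝ) with hSdef
  have hsum_rw : ∑ i ∈ Finset.Icc ((α + 1) / 2) α, (α.choose i : ℝ) * Mh ^ (α / 2)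
      = S * Mh ^ (α / 2) := by rw [hSdef, Finset.sum_mul]
  have hS0 : 0 ≤ S := Finset.sum_nonneg (fun i _ => by positivity)
  have hS : S ≤ 2 ^ α := by
    have h1 : S ≤ ∑ i ∈ Finset.range (α + 1), (α.choose i : ℝ) := by
      apply Finset.sum_le_sum_of_subset_of_nonneg
      · intro i hi
        simp only [Finset.mem_Icc, Finset.mem_range] at hi ⊢
        omega
      · intros; positivity
    have h2 : ∑ i ∈ Finset.range (α + 1), (α.choose i : ℝ) = 2 ^ α := by
      exact_mod_cast Nat.sum_range_choose α
    linarith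
  rw [hsum_rw]
  rcases Nat.even_or_odd α with ⟨k, hk⟩ | ⟨k, hk⟩
  · -- even case: α = k + k, k ≥ 1
    subst hk
    have hk1 : 1 ≤ k := by omega
    have e1 : (k + k + 1) / 2 = k := by omega
    have e2 : (k + k) / 2 = k := by omega
    rw [e1, e2]
    have hre : (((k + k : ℕ) : ℝ) - 1) / 2 = (k : ℝ) - 1/2 := by push_cast; ring
    rw [hre, Real.rpow_sub hp, Real.rpow_natCast, ← Real.sqrt_eq_rpow]
    have hsqpos : 0 < Real.sqrt (Ma * Mh) := Real.sqrt_pos.mpr hp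
    have hsq : Real.sqrt (Ma * Mh) ≤ 1/2 := by
      nlinarith [Real.sq_sqrt hp.le, Real.sqrt_nonneg (Ma * Mh)]
    rw [div_mul_eq_mul_div, le_div_iff₀ hsqpos]
    calc Ma ^ k * (S * Mh ^ k) * Real.sqrt (Ma * Mh)
        = (Ma * Mh) ^ k * (S * Real.sqrt (Ma * Mh)) := by rw [mul_pow]; ring
      _ ≤ (Ma * Mh) ^ k * ((2 : ℝ) ^ (k + k) * (1/2)) := by
          apply mul_le_mul_of_nonneg_left _ (by positivity)
          exact mul_le_mul hS hsq hsqpos.le (by positivity)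
      _ = (Ma * Mh) ^ k * 2 ^ (k + k - 1) := by
          have h2 : (2:ℝ) ^ (k + k) = 2 ^ (k + k - 1) * 2 := by
            rw [← pow_succ]; congr 1; omega
          rw [h2]; ring
  · -- odd case: α = 2k + 1
    subst hk
    have e1 : (2 * k + 1 + 1) / 2 = k + 1 := by omega
    have e2 : (2 * k + 1) / 2 = k := by omega
    have e3 : 2 * k + 1 - 1 = 2 * k := by omega
    rw [e1, e2, e3]
    have hre : (((2 * k + 1 : ℕ) : ℝ) - 1) / 2 = (k : ℝ) := by push_cast; ring
    rw [hre, Real.rpow_natCast]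
    have hMaS : Ma * S ≤ 2 ^ (2 * k) := by
      calc Ma * S ≤ (1/2) * 2 ^ (2 * k + 1) :=
            mul_le_mul hMa2 hS hS0 (by norm_num)
        _ = 2 ^ (2 * k) := by rw [pow_succ]; ring
    calc Ma ^ (k + 1) * (S * Mh ^ k)
        = (Ma * Mh) ^ k * (Ma * S) := by rw [mul_pow, pow_succ]; ring
      _ ≤ (Ma * Mh) ^ k * 2 ^ (2 * k) :=
          mul_le_mul_of_nonneg_left hMaS (by positivity)
end
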